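/- In the standard staircase triangulation of the prism C_d = σ × [0,1] (with facets a_1⋯a_i b_i⋯b_d, 1 ≤ i ≤ d), the facets are precisely the maximal cliques of the edge graph of the triangulation. -/

import Mathlib

/-! A set of vertices is a clique exactly when every `a`-index in it is at most every `b`-index
in it, since `a_j b_k` is an edge iff `j ≤ k`. So a clique lies in the facet indexed by its
largest `a`-index (or by the first index, if it has no `a`-vertex), and conversely a clique
containing the facet `i` contains `b_i` and `a_i`, which pins all its `a`-indices below `i` and
all its `b`-indices above `i`. -/

/-- The facet `a_1 ⋯ a_i b_i ⋯ b_d` of the staircase triangulation of the prism, as a set of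
abstract vertices: `(j, false)` stands for `a_{j+1}` and `(j, true)` for `b_{j+1}`. -/
def stairFacet (d : ℕ) (i : Fin d) : Set (Fin d × Bool) :=
  {p | (p.2 = false ∧ p.1 ≤ i) ∨ (p.2 = true ∧ i ≤ p.1)}

/-- The edge graph of the staircase triangulation of the prism: two distinct vertices are
adjacent iff they lie in a common facet. -/
def stairGraph (d : ℕ) : SimpleGraph (Fin d × Bool) :=
  SimpleGraph.fromRel fun x y => ∃ i : Fin d, x ∈ stairFacet d i ∧ y ∈ stairFacet d i

variable {d : ℕ}

@[simp]
lemma mem_stairFacet_false {i j : Fin d} : (j, false) ∈ stairFacet d i ↔ j ≤ i := by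
  simp [stairFacet]

@[simp]
lemma mem_stairFacet_true {i j : Fin d} : (j, true) ∈ stairFacet d i ↔ i ≤ j := by
  simp [stairFacet]

lemma stairGraph_adj_false_true {j k : Fin d} :
    (stairGraph d).Adj (j, false) (k, true) ↔ j ≤ k := by
  rw [stairGraph, SimpleGraph.fromRel_adj, and_iff_right (by simp)]
  constructor
  · rintro (⟨i, hj, hk⟩ | ⟨i, hk, hj⟩) <;>
      exact (mem_stairFacet_false.1 hj).trans (mem_stairFacet_true.1 hk)
  · exact fun hjk => Or.inl ⟨j, mem_stairFacet_false.2 le_rfl, mem_stairFacet_true.2 hjk⟩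

lemma stairFacet_isClique (i : Fin d) : (stairGraph d).IsClique (stairFacet d i) :=
  fun _ hx _ hy hxy => (SimpleGraph.fromRel_adj _ _ _).2 ⟨hxy, Or.inl ⟨i, hx, hy⟩⟩

lemma SimpleGraph.IsClique.le_of_stairGraph {s : Set (Fin d × Bool)}
    (hs : (stairGraph d).IsClique s) {j k : Fin d} (hj : (j, false) ∈ s) (hk : (k, true) ∈ s) :
    j ≤ k :=
  stairGraph_adj_false_true.1 (hs hj hk (by simp))

lemma eq_stairFacet_of_isClique_of_subset {t : Set (Fin d × Bool)} {i : Fin d}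
    (ht : (stairGraph d).IsClique t) (hit : stairFacet d i ⊆ t) : t = stairFacet d i := by
  refine Set.Subset.antisymm ?_ hit
  rintro ⟨j, _ | _⟩ hj
  · exact mem_stairFacet_false.2 (ht.le_of_stairGraph hj (hit (mem_stairFacet_true.2 le_rfl)))
  · exact mem_stairFacet_true.2 (ht.le_of_stairGraph (hit (mem_stairFacet_false.2 le_rfl)) hj)

lemma exists_subset_stairFacet_of_isClique [NeZero d] {s : Set (Fin d × Bool)}
    (hs : (stairGraph d).IsClique s) : ∃ i, s ⊆ stairFacet d i := by
  classical
  let aIndices : Finset (Fin d) := {j | (j, false) ∈ s}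
  refine ⟨aIndices.sup id, ?_⟩
  rintro ⟨j, _ | _⟩ hj
  · exact mem_stairFacet_false.2 (aIndices.le_sup (f := id) (by simpa [aIndices] using hj))
  · refine mem_stairFacet_true.2 (Finset.sup_le fun k hk => ?_)
    exact hs.le_of_stairGraph (by simpa [aIndices] using hk) hj

/-- In the staircase triangulation of the prism `C_d = σ × [0,1]`, the facets are exactly the
maximal cliques of the edge graph of the triangulation. -/
theorem stair_facets_eq_maximal_cliques (d : ℕ) (hd : 1 ≤ d) (s : Set (Fin d × Bool)) :
    (∃ i : Fin d, s = stairFacet d i) ↔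
      ((stairGraph d).IsClique s ∧
        ∀ t : Set (Fin d × Bool), (stairGraph d).IsClique t → s ⊆ t → s = t) := by
  constructor
  · rintro ⟨i, rfl⟩
    exact ⟨stairFacet_isClique i, fun t ht hit => (eq_stairFacet_of_isClique_of_subset ht hit).symm⟩
  · rintro ⟨hs, hmax⟩
    have : NeZero d := ⟨by omega⟩
    obtain ⟨i, hsi⟩ := exists_subset_stairFacet_of_isClique hs
    exact ⟨i, hmax _ (stairFacet_isClique i) hsi⟩
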